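/- arXiv:1801.08294 — 7 statements merged into one kernel-verified Lean document; each statement's English description precedes it below -/
import Mathlib

section
/- If P* is an optimal solution of the max-min fairness problem (i.e., P* is feasible and min_k R_k(P*) ≥ min_k R_k(P) for every feasible P), then every entry of P* is strictly positive and the total power constraint is tight: ∑_{k=1}^K P*_k = P_T. -/
/-- Achievable rate of user `k` in downlink NOMA:
`R_k(P) = log₂(1 + P_k g_k / (g_k ∑_{j<k} P_j + 1))`
(for `k = 0`, i.e. user 1, the sum is empty and this is `log₂(1 + P_1 g_1)`). -/
noncomputable def rate {K : ℕ} (g P : Fin K → ℝ) (k : Fin K) : ℝ :=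
  Real.logb 2
    (1 + P k * g k / (g k * (∑ j ∈ Finset.univ.filter (fun j => j < k), P j) + 1))

/-- A power vector is feasible if it is entrywise nonnegative and respects the
total power budget. -/
def Feasible (K : ℕ) (P_T : ℝ) (P : Fin K → ℝ) : Prop :=
  (∀ k, 0 ≤ P k) ∧ ∑ k, P k ≤ P_T

/-- The minimum achievable rate among the `K` users. -/
noncomputable def minRate {K : ℕ} (g P : Fin K → ℝ) : ℝ :=
  ⨅ k, rate g P k

lemma min_exists {K : ℕ} (hK : 1 ≤ K) (f : Fin K → ℝ) :
    ∃ k0, (⨅ i, f i) = f k0 ∧ ∀ j, f k0 ≤ f j := by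
  have : Nonempty (Fin K) := ⟨⟨0, hK⟩⟩
  obtain ⟨k0, hk0⟩ := Finite.exists_min f
  exact ⟨k0, le_antisymm (ciInf_le (Finite.bddBelow_range f) k0) (le_ciInf hk0), hk0⟩

lemma sum_prev_nonneg {K : ℕ} (P : Fin K → ℝ) (hP : ∀ j, 0 ≤ P j) (k : Fin K) :
    0 ≤ ∑ j ∈ Finset.univ.filter (fun j => j < k), P j :=
  Finset.sum_nonneg fun j _ => hP j

lemma rate_pos {K : ℕ} (g P : Fin K → ℝ) (k : Fin K) (hg : 0 < g k)
    (hP : ∀ j, 0 ≤ P j) (hPk : 0 < P k) : 0 < rate g P k := by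
  have hS := sum_prev_nonneg P hP k
  have hd : 0 < g k * (∑ j ∈ Finset.univ.filter (fun j => j < k), P j) + 1 := by nlinarith
  have hx : 0 < P k * g k / (g k * (∑ j ∈ Finset.univ.filter (fun j => j < k), P j) + 1) :=
    div_pos (mul_pos hPk hg) hd
  exact Real.logb_pos one_lt_two (by linarith)

lemma pos_of_rate_pos {K : ℕ} (g P : Fin K → ℝ) (k : Fin K) (hg : 0 < g k)
    (hP : ∀ j, 0 ≤ P j) (hr : 0 < rate g P k) : 0 < P k := by
  rcases (hP k).lt_or_eq with h | h
  · exact h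
  · exfalso
    have : rate g P k = 0 := by
      unfold rate
      rw [← h]
      simp
    linarith

theorem stmt_1 (K : ℕ) (hK : 1 ≤ K) (g : Fin K → ℝ)
    (hgpos : ∀ k, 0 < g k) (hgdec : StrictAnti g)
    (P_T : ℝ) (hPT : 0 < P_T)
    (Pstar : Fin K → ℝ) (hfeas : Feasible K P_T Pstar)
    (hopt : ∀ Q : Fin K → ℝ, Feasible K P_T Q → minRate g Q ≤ minRate g Pstar) :
    (∀ k, 0 < Pstar k) ∧ ∑ k, Pstar k = P_T := by
  obtain ⟨hPnn, hPsum⟩ := hfeas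
  -- equal power allocation
  set Q0 : Fin K → ℝ := fun _ => P_T / K with hQ0
  have hKpos : (0:ℝ) < K := by exact_mod_cast Nat.lt_of_lt_of_le Nat.zero_lt_one hK
  have hQ0pos : ∀ k, 0 < Q0 k := fun k => div_pos hPT hKpos
  have hQ0feas : Feasible K P_T Q0 := by
    refine ⟨fun k => (hQ0pos k).le, ?_⟩
    simp [hQ0, Finset.sum_const, Finset.card_univ]
    rw [mul_div_cancel₀ _ (ne_of_gt hKpos)]
  have hminQ0 : 0 < minRate g Q0 := by
    obtain ⟨k0, hk0eq, _⟩ := min_exists hK (rate g Q0)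
    rw [minRate, hk0eq]
    exact rate_pos g Q0 k0 (hgpos k0) (fun j => (hQ0pos j).le) (hQ0pos k0)
  have hminP : 0 < minRate g Pstar := lt_of_lt_of_le hminQ0 (hopt Q0 hQ0feas)
  have hpos : ∀ k, 0 < Pstar k := by
    intro k
    have : minRate g Pstar ≤ rate g Pstar k := ciInf_le (Finite.bddBelow_range _) k
    exact pos_of_rate_pos g Pstar k (hgpos k) hPnn (lt_of_lt_of_le hminP this)
  refine ⟨hpos, ?_⟩
  by_contra hne
  have hlt : ∑ k, Pstar k < P_T := lt_of_le_of_ne hPsum hne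
  have hSpos : 0 < ∑ k, Pstar k := by
    apply Finset.sum_pos (fun k _ => hpos k)
    exact ⟨⟨0, hK⟩, Finset.mem_univ _⟩
  set c : ℝ := P_T / ∑ k, Pstar k with hc
  have hc1 : 1 < c := (one_lt_div hSpos).mpr hlt
  set Q : Fin K → ℝ := fun j => c * Pstar j with hQ
  have hQfeas : Feasible K P_T Q := by
    constructor
    · intro k; exact mul_nonneg (by linarith) (hPnn k)
    · rw [hQ]
      simp only [← Finset.mul_sum]
      rw [hc, div_mul_cancel₀ _ (ne_of_gt hSpos)]
  -- every rate strictly increases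
  have hrate_lt : ∀ k, rate g Pstar k < rate g Q k := by
    intro k
    have hS := sum_prev_nonneg Pstar hPnn k
    set S := ∑ j ∈ Finset.univ.filter (fun j => j < k), Pstar j with hSdef
    have hsum : ∑ j ∈ Finset.univ.filter (fun j => j < k), Q j = c * S := by
      rw [hQ, hSdef, Finset.mul_sum]
    have hg := hgpos k
    have hPk := hpos k
    unfold rate
    rw [hsum]
    apply Real.logb_lt_logb one_lt_two
    · have hd : 0 < g k * S + 1 := by nlinarith
      have := div_nonneg (mul_nonneg (hPnn k) hg.le) hd.le
      linarith
    · have hd1 : 0 < g k * S + 1 := by nlinarith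
      have hcS : 0 ≤ g k * (c * S) :=
        mul_nonneg hg.le (mul_nonneg (by linarith) hS)
      have hd2 : 0 < g k * (c * S) + 1 := by linarith
      have key : Pstar k * g k / (g k * S + 1) < Q k * g k / (g k * (c * S) + 1) := by
        rw [div_lt_div_iff₀ hd1 hd2, hQ]
        have hpg : 0 < Pstar k * g k := mul_pos hPk hg
        simp only
        nlinarith [mul_pos hpg (sub_pos.mpr hc1)]
      linarith
  obtain ⟨k1, hk1eq, hk1min⟩ := min_exists hK (rate g Q)
  have h1 : minRate g Pstar < minRate g Q := by
    unfold minRate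
    rw [hk1eq]
    calc minRate g Pstar ≤ rate g Pstar k1 := ciInf_le (Finite.bddBelow_range _) k1
      _ < rate g Q k1 := hrate_lt k1
  exact absurd (hopt Q hQfeas) (not_le.mpr h1)
end

section
/- If P* is an optimal solution of the max-min fairness problem (i.e., P* is feasible and min_k R_k(P*) ≥ min_k R_k(P) for every feasible P), then all users achieve the same rate at P*: R_j(P*) = R_k(P*) for all j, k ∈ {1, …, K}. -/
open Finset

variable {K : ℕ} {g : Fin K → ℝ}

theorem rate_eq_logb_one_add_div (P : Fin K → ℝ) {k : Fin K} (hg : g k ≠ 0) :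
    rate g P k = Real.logb 2 (1 + P k / (∑ j ∈ univ.filter (· < k), P j + (g k)⁻¹)) := by
  rw [rate]
  congr 2
  field_simp

theorem sum_filter_lt_add_inv_pos {P : Fin K → ℝ} {k : Fin K} (hg : 0 < g k)
    (hP : ∀ j, 0 ≤ P j) : 0 < ∑ j ∈ univ.filter (· < k), P j + (g k)⁻¹ :=
  add_pos_of_nonneg_of_pos (sum_nonneg fun j _ => hP j) (inv_pos.mpr hg)

theorem le_rate_iff {P : Fin K → ℝ} {k : Fin K} (hg : 0 < g k) (hP : ∀ j, 0 ≤ P j) (t : ℝ) :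
    t ≤ rate g P k ↔ (2 ^ t - 1) * (∑ j ∈ univ.filter (· < k), P j + (g k)⁻¹) ≤ P k := by
  have hD := sum_filter_lt_add_inv_pos hg hP
  rw [rate_eq_logb_one_add_div P hg.ne', Real.le_logb_iff_rpow_le one_lt_two
    (add_pos_of_pos_of_nonneg one_pos (div_nonneg (hP k) hD.le)), ← le_div_iff₀ hD,
    sub_le_iff_le_add']

theorem lt_rate_iff {P : Fin K → ℝ} {k : Fin K} (hg : 0 < g k) (hP : ∀ j, 0 ≤ P j) (t : ℝ) :
    t < rate g P k ↔ (2 ^ t - 1) * (∑ j ∈ univ.filter (· < k), P j + (g k)⁻¹) < P k := by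
  have hD := sum_filter_lt_add_inv_pos hg hP
  rw [rate_eq_logb_one_add_div P hg.ne', Real.lt_logb_iff_rpow_lt one_lt_two
    (add_pos_of_pos_of_nonneg one_pos (div_nonneg (hP k) hD.le)), ← lt_div_iff₀ hD,
    sub_lt_iff_lt_add']

section equalRatePower

noncomputable def equalRatePower (g : Fin K → ℝ) (c : ℝ) (k : Fin K) : ℝ :=
  c * (∑ j ∈ (univ.filter (· < k)).attach, equalRatePower g c j + (g k)⁻¹)
termination_by k
decreasing_by exact (mem_filter.mp j.2).2

theorem equalRatePower_eq (g : Fin K → ℝ) (c : ℝ) (k : Fin K) :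
    equalRatePower g c k = c * (∑ j ∈ univ.filter (· < k), equalRatePower g c j + (g k)⁻¹) := by
  rw [equalRatePower, sum_attach (univ.filter (· < k)) (equalRatePower g c)]

variable {c : ℝ}

theorem equalRatePower_pos (hg : ∀ k, 0 < g k) (hc : 0 < c) (k : Fin K) :
    0 < equalRatePower g c k := by
  induction k using WellFoundedLT.induction with
  | ind k ih =>
    rw [equalRatePower_eq]
    have hS : 0 ≤ ∑ j ∈ univ.filter (· < k), equalRatePower g c j :=
      sum_nonneg fun j hj => (ih j (mem_filter.mp hj).2).le
    exact mul_pos hc (add_pos_of_nonneg_of_pos hS (inv_pos.mpr (hg k)))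

theorem equalRatePower_le (hc : 0 ≤ c) {P : Fin K → ℝ}
    (hP : ∀ k, c * (∑ j ∈ univ.filter (· < k), P j + (g k)⁻¹) ≤ P k) (k : Fin K) :
    equalRatePower g c k ≤ c * (∑ j ∈ univ.filter (· < k), P j + (g k)⁻¹) := by
  induction k using WellFoundedLT.induction with
  | ind k ih =>
    rw [equalRatePower_eq]
    gcongr with j hj
    exact (ih j (mem_filter.mp hj).2).trans (hP j)

end equalRatePower

theorem minRate_le_rate (P : Fin K → ℝ) (k : Fin K) : minRate g P ≤ rate g P k :=
  ciInf_le (Set.finite_range _).bddBelow k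

theorem lt_minRate_iff [Nonempty (Fin K)] {P : Fin K → ℝ} {t : ℝ} :
    t < minRate g P ↔ ∀ k, t < rate g P k := by
  refine ⟨fun h k => h.trans_le (minRate_le_rate P k), fun h => ?_⟩
  obtain ⟨m, hm⟩ := exists_eq_ciInf_of_finite (f := rate g P)
  rw [minRate, ← hm]
  exact h m

variable {P_T : ℝ}

theorem lt_rate_smul_equalRatePower (hg : ∀ k, 0 < g k) {t l : ℝ} (ht : 0 < t) (hl : 1 < l)
    (k : Fin K) : t < rate g (l • equalRatePower g (2 ^ t - 1)) k := by
  have hc : 0 < (2 : ℝ) ^ t - 1 := sub_pos.mpr (Real.one_lt_rpow one_lt_two ht)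
  have hE := equalRatePower_pos hg hc
  rw [lt_rate_iff (P := l • _) (hg k) fun j => (mul_pos (one_pos.trans hl) (hE j)).le]
  simp only [Pi.smul_apply, smul_eq_mul, ← mul_sum]
  rw [equalRatePower_eq]
  have := mul_pos hc (inv_pos.mpr (hg k))
  nlinarith

theorem exists_feasible_zero_lt_minRate [Nonempty (Fin K)] (hg : ∀ k, 0 < g k) (hP_T : 0 < P_T) :
    ∃ Q, Feasible K P_T Q ∧ 0 < minRate g Q := by
  have hK : (0 : ℝ) < K := by exact_mod_cast Fin.pos'
  have hQ : 0 < P_T / K := div_pos hP_T hK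
  refine ⟨fun _ => P_T / K, ⟨fun _ => hQ.le, ?_⟩, lt_minRate_iff.mpr fun k => ?_⟩
  · simp [mul_div_cancel₀ _ hK.ne']
  · rw [lt_rate_iff (hg k) fun _ => hQ.le, Real.rpow_zero, sub_self, zero_mul]
    exact hQ

theorem exists_feasible_lt_minRate [Nonempty (Fin K)] (hg : ∀ k, 0 < g k) {P : Fin K → ℝ}
    (hP : Feasible K P_T P) {t : ℝ} (ht : 0 < t) (hle : ∀ k, t ≤ rate g P k) {k₀ : Fin K}
    (hlt : t < rate g P k₀) : ∃ Q, Feasible K P_T Q ∧ t < minRate g Q := by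
  set c : ℝ := 2 ^ t - 1
  have hc : 0 < c := sub_pos.mpr (Real.one_lt_rpow one_lt_two ht)
  set E := equalRatePower g c
  have hE_pos := equalRatePower_pos hg hc
  have hsuper k := (le_rate_iff (hg k) hP.1 t).mp (hle k)
  have hE_le k : E k ≤ P k := (equalRatePower_le hc.le hsuper k).trans (hsuper k)
  have hE_lt : E k₀ < P k₀ :=
    (equalRatePower_le hc.le hsuper k₀).trans_lt ((lt_rate_iff (hg k₀) hP.1 t).mp hlt)
  have hsum_pos : 0 < ∑ k, E k := sum_pos (fun k _ => hE_pos k) univ_nonempty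
  have hsum_lt : ∑ k, E k < P_T :=
    (sum_lt_sum (fun k _ => hE_le k) ⟨k₀, mem_univ k₀, hE_lt⟩).trans_le hP.2
  refine ⟨(P_T / ∑ k, E k) • E, ⟨fun k => ?_, ?_⟩, lt_minRate_iff.mpr fun k => ?_⟩
  · exact mul_nonneg (div_pos (hsum_pos.trans hsum_lt) hsum_pos).le (hE_pos k).le
  · simp only [Pi.smul_apply, smul_eq_mul, ← mul_sum]
    rw [div_mul_cancel₀ _ hsum_pos.ne']
  · exact lt_rate_smul_equalRatePower hg ht ((one_lt_div hsum_pos).mpr hsum_lt) k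

theorem stmt_2_general (K : ℕ) (g : Fin K → ℝ)
    (hgpos : ∀ k, 0 < g k)
    (P_T : ℝ) (hPT : 0 < P_T)
    (Pstar : Fin K → ℝ) (hfeas : Feasible K P_T Pstar)
    (hopt : ∀ Q : Fin K → ℝ, Feasible K P_T Q → minRate g Q ≤ minRate g Pstar) :
    ∀ j k : Fin K, rate g Pstar j = rate g Pstar k := by
  intro j k
  have : Nonempty (Fin K) := ⟨j⟩
  have hmin_pos : 0 < minRate g Pstar := by
    obtain ⟨Q, hQ, hQ_pos⟩ := exists_feasible_zero_lt_minRate hgpos hPT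
    exact hQ_pos.trans_le (hopt Q hQ)
  suffices h : ∀ i, rate g Pstar i = minRate g Pstar by rw [h j, h k]
  intro i
  refine ((minRate_le_rate Pstar i).eq_or_lt).elim Eq.symm fun hlt => ?_
  obtain ⟨Q, hQ, hQ_lt⟩ :=
    exists_feasible_lt_minRate hgpos hfeas hmin_pos (minRate_le_rate Pstar) hlt
  exact absurd (hopt Q hQ) hQ_lt.not_ge

theorem stmt_2 (K : ℕ) (hK : 1 ≤ K) (g : Fin K → ℝ)
    (hgpos : ∀ k, 0 < g k) (hgdec : StrictAnti g)
    (P_T : ℝ) (hPT : 0 < P_T)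
    (Pstar : Fin K → ℝ) (hfeas : Feasible K P_T Pstar)
    (hopt : ∀ Q : Fin K → ℝ, Feasible K P_T Q → minRate g Q ≤ minRate g Pstar) :
    ∀ j k : Fin K, rate g Pstar j = rate g Pstar k :=
  stmt_2_general K g hgpos P_T hPT Pstar hfeas hopt
end

section
/- Let P ∈ ℝ^K have all entries strictly positive with ∑_k P_k = P_T, let s = P / P_T, and let R > 0. Then R_k(P) = R for every k if and only if s satisfies the linear system s / (2^R − 1) = A s + b, and in that case (since 𝟙ᵀs = 1) s is an eigenvector of B = A + b𝟙ᵀ with eigenvalue 1/(2^R − 1), i.e., B s = s / (2^R − 1). -/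
/-- The strictly lower-triangular all-ones matrix `A`, `A_{ik} = 1` iff `k < i`. -/
def Amat (K : ℕ) : Matrix (Fin K) (Fin K) ℝ :=
  Matrix.of fun i k => if k < i then 1 else 0

/-- The vector `b` with entries `b_k = 1/(P_T g_k)`. -/
noncomputable def bvec (K : ℕ) (g : Fin K → ℝ) (P_T : ℝ) : Fin K → ℝ :=
  fun k => 1 / (P_T * g k)

/-- The matrix `B = A + b 𝟙ᵀ`, i.e. `B_{ik} = A_{ik} + b_i`. -/
noncomputable def Bmat (K : ℕ) (g : Fin K → ℝ) (P_T : ℝ) : Matrix (Fin K) (Fin K) ℝ :=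
  Amat K + Matrix.of fun i _ => bvec K g P_T i

open Finset Matrix

lemma Amat_mulVec_apply {K : ℕ} (x : Fin K → ℝ) (i : Fin K) :
    (Amat K *ᵥ x) i = ∑ j ∈ univ.filter (· < i), x j := by
  simp only [Amat, mulVec, dotProduct, of_apply, ite_mul, one_mul, zero_mul, sum_filter]

lemma Bmat_mulVec {K : ℕ} (g : Fin K → ℝ) (P_T : ℝ) (x : Fin K → ℝ) :
    Bmat K g P_T *ᵥ x = Amat K *ᵥ x + (∑ j, x j) • bvec K g P_T := by
  rw [Bmat, add_mulVec]
  congr 1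
  ext i
  simp only [mulVec, dotProduct, of_apply, Pi.smul_apply, smul_eq_mul]
  rw [← mul_sum, mul_comm]

lemma rate_eq_iff {K : ℕ} {g P : Fin K → ℝ} {k : Fin K} (hg : 0 < g k) (hP : ∀ j, 0 ≤ P j)
    (R : ℝ) :
    rate g P k = R ↔
      P k * g k = (2 ^ R - 1) * (g k * ∑ j ∈ univ.filter (· < k), P j + 1) := by
  set I := ∑ j ∈ univ.filter (· < k), P j
  have hD : 0 < g k * I + 1 := by
    have : 0 ≤ I := sum_nonneg fun j _ => hP j
    positivity
  have hx : 0 < 1 + P k * g k / (g k * I + 1) := by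
    have := hP k
    positivity
  rw [rate, Real.logb_eq_iff_rpow_eq (by norm_num) (by norm_num) hx, eq_comm, ← eq_sub_iff_add_eq',
    div_eq_iff hD.ne']

lemma rate_eq_iff_normalized {K : ℕ} {g P : Fin K → ℝ} {k : Fin K} (hg : 0 < g k)
    (hP : ∀ j, 0 ≤ P j) {P_T : ℝ} (hPT : P_T ≠ 0) {R : ℝ} (hR : 0 < R) :
    rate g P k = R ↔
      (2 ^ R - 1)⁻¹ * (P k / P_T) = (∑ j ∈ univ.filter (· < k), P j) / P_T + 1 / (P_T * g k) := by
  have hc : (2 : ℝ) ^ R - 1 ≠ 0 := (sub_pos.2 (Real.one_lt_rpow (by norm_num) hR)).ne'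
  have hg' := hg.ne'
  rw [rate_eq_iff hg hP, mul_comm (g k)]
  field_simp

theorem stmt_3_general (K : ℕ) (g : Fin K → ℝ)
    (hgpos : ∀ k, 0 < g k)
    (P_T : ℝ) (hPT : 0 < P_T)
    (P : Fin K → ℝ) (hPpos : ∀ k, 0 < P k) (hPsum : ∑ k, P k = P_T)
    (R : ℝ) (hR : 0 < R) :
    ((∀ k, rate g P k = R) ↔
        ((2 : ℝ) ^ R - 1)⁻¹ • (fun k => P k / P_T) =
          (Amat K).mulVec (fun k => P k / P_T) + bvec K g P_T) ∧
      ((∀ k, rate g P k = R) →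
        (Bmat K g P_T).mulVec (fun k => P k / P_T) =
          ((2 : ℝ) ^ R - 1)⁻¹ • (fun k => P k / P_T)) := by
  have hiff : (∀ k, rate g P k = R) ↔
      ((2 : ℝ) ^ R - 1)⁻¹ • (fun k => P k / P_T) =
        (Amat K).mulVec (fun k => P k / P_T) + bvec K g P_T := by
    rw [funext_iff]
    refine forall_congr' fun k => ?_
    rw [rate_eq_iff_normalized (hgpos k) (fun j => (hPpos j).le) hPT.ne' hR, Pi.add_apply,
      Amat_mulVec_apply, ← sum_div]
    rfl
  refine ⟨hiff, fun h => ?_⟩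
  have hsum : ∑ k, P k / P_T = 1 := by rw [← sum_div, hPsum, div_self hPT.ne']
  rw [Bmat_mulVec, hsum, one_smul, hiff.mp h]

theorem stmt_3 (K : ℕ) (hK : 1 ≤ K) (g : Fin K → ℝ)
    (hgpos : ∀ k, 0 < g k) (hgdec : StrictAnti g)
    (P_T : ℝ) (hPT : 0 < P_T)
    (P : Fin K → ℝ) (hPpos : ∀ k, 0 < P k) (hPsum : ∑ k, P k = P_T)
    (R : ℝ) (hR : 0 < R) :
    ((∀ k, rate g P k = R) ↔
        ((2 : ℝ) ^ R - 1)⁻¹ • (fun k => P k / P_T) =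
          (Amat K).mulVec (fun k => P k / P_T) + bvec K g P_T) ∧
      ((∀ k, rate g P k = R) →
        (Bmat K g P_T).mulVec (fun k => P k / P_T) =
          ((2 : ℝ) ^ R - 1)⁻¹ • (fun k => P k / P_T)) :=
  stmt_3_general K g hgpos P_T hPT P hPpos hPsum R hR
end

section
/- Suppose λ > 0 and v ∈ ℝ^K has all entries strictly positive with B v = λ v. Then the power vector P = P_T · v / (𝟙ᵀv) has all entries strictly positive, satisfies ∑_k P_k = P_T, and achieves equal rates R_k(P) = log₂(1 + 1/λ) for every k ∈ {1, …, K}. -/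
theorem stmt_4 (K : ℕ) (hK : 1 ≤ K) (g : Fin K → ℝ)
    (hgpos : ∀ k, 0 < g k) (hgdec : StrictAnti g)
    (P_T : ℝ) (hPT : 0 < P_T)
    (lam : ℝ) (hlam : 0 < lam)
    (v : Fin K → ℝ) (hv : ∀ k, 0 < v k)
    (heig : (Bmat K g P_T).mulVec v = lam • v) :
    (∀ k, 0 < P_T * v k / (∑ j, v j)) ∧
      (∑ k, P_T * v k / (∑ j, v j)) = P_T ∧
      ∀ k, rate g (fun j => P_T * v j / (∑ i, v i)) k = Real.logb 2 (1 + 1 / lam) := by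
  have hS : 0 < ∑ j, v j :=
    Finset.sum_pos (fun j _ => hv j) ⟨⟨0, hK⟩, Finset.mem_univ _⟩
  have hSne := hS.ne'
  refine ⟨fun k => by have := hv k; positivity, ?_, ?_⟩
  · rw [← Finset.sum_div, ← Finset.mul_sum]
    field_simp
  · intro k
    have h := congrFun heig k
    simp only [Bmat, Amat, bvec, Matrix.mulVec, dotProduct, Matrix.add_apply,
      Matrix.of_apply, Pi.add_apply, Pi.smul_apply, smul_eq_mul, add_mul,
      Finset.sum_add_distrib, ite_mul, one_mul, zero_mul, ← Finset.mul_sum] at h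
    rw [← Finset.sum_filter] at h
    have hgk := hgpos k
    have hgkne := hgk.ne'
    have hPTne := hPT.ne'
    have hlamne := hlam.ne'
    have hvk := hv k
    field_simp at h
    set S := ∑ i, v i with hSdef
    set T := ∑ j ∈ Finset.univ.filter (fun j => j < k), v j with hT
    -- h : T + 1/(P_T * g k) * S = lam * v k
    unfold rate
    congr 1
    have hsum : ∑ j ∈ Finset.univ.filter (fun j => j < k), P_T * v j / S
        = P_T * T / S := by
      rw [hT, Finset.mul_sum, Finset.sum_div]
    rw [hsum]
    have hden : g k * (P_T * T / S) + 1 = g k * P_T * lam * v k / S := by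
      field_simp
      linear_combination h
    rw [hden]
    field_simp
end

section
/- There exists a unique pair (R, P) with R > 0 and P ∈ ℝ^K such that all entries of P are strictly positive, ∑_k P_k = P_T, and R_k(P) = R for every k ∈ {1, …, K}; i.e., the equal-rate full-power allocation exists and is unique. -/
open Finset Real

namespace EqualRate

variable {G : ℕ → ℝ} {s t c : ℝ} {n : ℕ}

noncomputable def cumulativePower (G : ℕ → ℝ) (t : ℝ) : ℕ → ℝ
  | 0 => 0
  | n + 1 => cumulativePower G t n + (t - 1) * (cumulativePower G t n + 1 / G n)

noncomputable def userPower (G : ℕ → ℝ) (t : ℝ) (n : ℕ) : ℝ :=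
  (t - 1) * (cumulativePower G t n + 1 / G n)

theorem cumulativePower_succ (G : ℕ → ℝ) (t : ℝ) (n : ℕ) :
    cumulativePower G t (n + 1) = cumulativePower G t n + userPower G t n :=
  rfl

theorem cumulativePower_one (G : ℕ → ℝ) : ∀ n, cumulativePower G 1 n = 0
  | 0 => rfl
  | n + 1 => by simp [cumulativePower, cumulativePower_one G n]

theorem continuous_cumulativePower (G : ℕ → ℝ) : ∀ n, Continuous fun t => cumulativePower G t n
  | 0 => continuous_const
  | n + 1 => by
    have := continuous_cumulativePower G n
    simp only [cumulativePower]
    fun_prop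

theorem cumulativePower_nonneg (hG : ∀ n, 0 < G n) (ht : 1 ≤ t) :
    ∀ n, 0 ≤ cumulativePower G t n
  | 0 => le_rfl
  | n + 1 => by
    have := cumulativePower_nonneg hG ht n
    have := hG n
    simp only [cumulativePower]
    have : 0 ≤ t - 1 := by linarith
    positivity

theorem userPower_pos (hG : ∀ n, 0 < G n) (ht : 1 < t) (n : ℕ) : 0 < userPower G t n := by
  have := cumulativePower_nonneg hG ht.le n
  have := hG n
  have : 0 < t - 1 := by linarith
  unfold userPower
  positivity

theorem cumulativePower_mono (hG : ∀ n, 0 < G n) (hs : 1 ≤ s) (hst : s ≤ t) :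
    ∀ n, cumulativePower G s n ≤ cumulativePower G t n
  | 0 => le_rfl
  | n + 1 => by
    have := cumulativePower_mono hG hs hst n
    have := cumulativePower_nonneg hG hs n
    have := hG n
    simp only [cumulativePower]
    gcongr
    linarith

theorem strictMonoOn_cumulativePower (hG : ∀ n, 0 < G n) (hn : 0 < n) :
    StrictMonoOn (fun t => cumulativePower G t n) (Set.Ici 1) := by
  obtain ⟨m, rfl⟩ := Nat.exists_eq_add_one_of_ne_zero hn.ne'
  intro s hs t _ hst
  have := cumulativePower_mono hG hs hst.le m
  have := cumulativePower_nonneg hG hs m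
  have := hG m
  have hpos : 0 < cumulativePower G s m + 1 / G m := by positivity
  have hst' : (s - 1) * (cumulativePower G s m + 1 / G m)
      < (t - 1) * (cumulativePower G t m + 1 / G m) := by
    calc (s - 1) * (cumulativePower G s m + 1 / G m)
        < (t - 1) * (cumulativePower G s m + 1 / G m) := by gcongr
      _ ≤ (t - 1) * (cumulativePower G t m + 1 / G m) := by gcongr; linarith [Set.mem_Ici.1 hs]
  simp only [cumulativePower]
  linarith

theorem existsUnique_cumulativePower_eq (hG : ∀ n, 0 < G n) (hn : 0 < n) (hc : 0 < c) :
    ∃! t, 1 < t ∧ cumulativePower G t n = c := by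
  obtain ⟨m, rfl⟩ := Nat.exists_eq_add_one_of_ne_zero hn.ne'
  have hGm := hG m
  set T := 1 + c * G m
  have hT : 1 ≤ T := le_add_of_nonneg_right (by positivity)
  have hcT : c ≤ cumulativePower G T (m + 1) := by
    have hS := cumulativePower_nonneg hG hT m
    have hTc : (T - 1) * (1 / G m) = c := by field_simp; ring
    have : 0 ≤ (T - 1) * cumulativePower G T m := mul_nonneg (by linarith) hS
    rw [cumulativePower]
    linarith
  obtain ⟨t, ⟨ht, -⟩, htc⟩ := intermediate_value_Icc hT
    (continuous_cumulativePower G (m + 1)).continuousOn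
    ⟨(cumulativePower_one G _).symm ▸ hc.le, hcT⟩
  have ht : 1 < t := by
    refine ht.lt_of_ne ?_
    rintro rfl
    exact hc.ne ((cumulativePower_one G _).symm.trans htc)
  exact ⟨t, ⟨ht, htc⟩, fun s ⟨hs, hsc⟩ =>
    (strictMonoOn_cumulativePower hG hn).injOn hs.le ht.le (hsc.trans htc.symm)⟩

theorem logb_one_add_mul_div_eq_logb_iff {g S p t : ℝ} (hg : 0 < g) (hS : 0 ≤ S) (hp : 0 ≤ p)
    (ht : 0 < t) :
    logb 2 (1 + p * g / (g * S + 1)) = logb 2 t ↔ p = (t - 1) * (S + 1 / g) := by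
  rw [(logb_injOn_pos one_lt_two).eq_iff (Set.mem_Ioi.2 (by positivity)) ht]
  field_simp
  constructor <;> intro h <;> linarith

theorem sum_filter_val_lt_succ {K : ℕ} (P : Fin K → ℝ) {n : ℕ} (hn : n < K) :
    ∑ j ∈ univ.filter (fun j : Fin K => (j : ℕ) < n + 1), P j
      = ∑ j ∈ univ.filter (fun j : Fin K => (j : ℕ) < n), P j + P ⟨n, hn⟩ := by
  rw [add_comm _ (P _), ← sum_insert (by simp)]
  congr 1
  ext j
  simp only [Order.lt_add_one_iff, mem_filter, mem_univ, true_and, mem_insert, Fin.ext_iff]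
  omega

/- The hypothesis only asks for `P k` once its predecessors are known to sum to the right value,
so that it covers both the explicit allocation `userPower` and any equal-rate allocation. -/
theorem sum_filter_val_lt_eq_cumulativePower {K : ℕ} {P : Fin K → ℝ}
    (hP : ∀ k : Fin K, ∑ j ∈ univ.filter (· < k), P j = cumulativePower G t k →
      P k = userPower G t k) :
    ∀ n ≤ K, ∑ j ∈ univ.filter (fun j : Fin K => (j : ℕ) < n), P j = cumulativePower G t n
  | 0, _ => by simp [cumulativePower]
  | n + 1, hn => by
    have ih := sum_filter_val_lt_eq_cumulativePower hP n (by omega)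
    rw [sum_filter_val_lt_succ P hn, ih, hP ⟨n, hn⟩ ih, cumulativePower_succ]

theorem sum_filter_lt_eq_cumulativePower {K : ℕ} {P : Fin K → ℝ}
    (hP : ∀ k : Fin K, ∑ j ∈ univ.filter (· < k), P j = cumulativePower G t k →
      P k = userPower G t k) (k : Fin K) :
    ∑ j ∈ univ.filter (· < k), P j = cumulativePower G t k :=
  sum_filter_val_lt_eq_cumulativePower hP k k.is_lt.le

theorem sum_eq_cumulativePower {K : ℕ} {P : Fin K → ℝ}
    (hP : ∀ k : Fin K, ∑ j ∈ univ.filter (· < k), P j = cumulativePower G t k →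
      P k = userPower G t k) :
    ∑ k, P k = cumulativePower G t K := by
  rw [← sum_filter_val_lt_eq_cumulativePower hP K le_rfl, filter_true_of_mem fun j _ => j.isLt]

theorem forall_rate_eq_logb_iff (hG : ∀ n, 0 < G n) (ht : 1 ≤ t) {K : ℕ} {P : Fin K → ℝ}
    (hP : ∀ k, 0 ≤ P k) :
    (∀ k, rate (fun k : Fin K => G k) P k = logb 2 t) ↔ P = fun k : Fin K => userPower G t k := by
  have hrate (k : Fin K) : rate (fun k : Fin K => G k) P k = logb 2 t ↔
      P k = (t - 1) * (∑ j ∈ univ.filter (· < k), P j + 1 / G k) :=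
    logb_one_add_mul_div_eq_logb_iff (hG k) (sum_nonneg fun j _ => hP j) (hP k) (by linarith)
  simp only [hrate]
  constructor
  · intro h
    ext k
    rw [h k, sum_filter_lt_eq_cumulativePower (fun k hk => by rw [h k, hk]; rfl) k]
    rfl
  · rintro rfl k
    rw [sum_filter_lt_eq_cumulativePower (fun k _ => rfl) k]
    rfl

end EqualRate

open EqualRate in
theorem stmt_7_general (K : ℕ) (hK : 1 ≤ K) (g : Fin K → ℝ)
    (hgpos : ∀ k, 0 < g k)
    (P_T : ℝ) (hPT : 0 < P_T) :
    ∃! p : ℝ × (Fin K → ℝ),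
      0 < p.1 ∧ (∀ k, 0 < p.2 k) ∧ (∑ k, p.2 k) = P_T ∧
        ∀ k, rate g p.2 k = p.1 := by
  -- the gains beyond index `K` never enter, `1` only keeps them positive
  obtain ⟨G, hG, rfl⟩ : ∃ G : ℕ → ℝ, (∀ n, 0 < G n) ∧ g = fun k : Fin K => G k :=
    ⟨fun n => if h : n < K then g ⟨n, h⟩ else 1,
      fun n => by dsimp only; split_ifs <;> simp [hgpos], by ext k; simp⟩
  obtain ⟨t, ⟨ht, hsum⟩, huniq⟩ := existsUnique_cumulativePower_eq hG hK hPT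
  have hpos k := userPower_pos hG ht k
  refine ⟨(logb 2 t, fun k : Fin K => userPower G t k), ⟨logb_pos one_lt_two ht, fun k => hpos k,
    by rw [sum_eq_cumulativePower fun k _ => rfl, hsum],
    (forall_rate_eq_logb_iff hG ht.le fun k => (hpos k).le).2 rfl⟩, ?_⟩
  rintro ⟨R, P⟩ ⟨hR, hP, hPsum, hrate⟩
  have h2R : 1 < (2 : ℝ) ^ R := one_lt_rpow one_lt_two hR
  obtain rfl : P = fun k : Fin K => userPower G (2 ^ R) k :=
    (forall_rate_eq_logb_iff hG h2R.le fun k => (hP k).le).1 (by simpa [logb_rpow] using hrate)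
  obtain rfl : 2 ^ R = t :=
    huniq _ ⟨h2R, by rw [← sum_eq_cumulativePower fun k _ => rfl]; exact hPsum⟩
  simp [logb_rpow]

/-- The equal-rate full-power allocation exists and is unique. -/
theorem stmt_7 (K : ℕ) (hK : 1 ≤ K) (g : Fin K → ℝ)
    (hgpos : ∀ k, 0 < g k) (hgdec : StrictAnti g)
    (P_T : ℝ) (hPT : 0 < P_T) :
    ∃! p : ℝ × (Fin K → ℝ),
      0 < p.1 ∧ (∀ k, 0 < p.2 k) ∧ (∑ k, p.2 k) = P_T ∧
        ∀ k, rate g p.2 k = p.1 :=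
  stmt_7_general K hK g hgpos P_T hPT
end

section
/- For every R > 0 the triangular linear system s = (2^R − 1)(A s + b) has a unique solution s(R) ∈ ℝ^K; all entries of s(R) are strictly positive, every entry of s(R) is a continuous and strictly increasing function of R on (0, ∞), the total 𝟙ᵀs(R) tends to 0 as R → 0⁺, and 𝟙ᵀs(R) tends to +∞ as R → +∞. -/
open Finset Filter

/-- `b` extended to `ℕ` by zero. -/
noncomputable def Bf (K : ℕ) (g : Fin K → ℝ) (P_T : ℝ) : ℕ → ℝ :=
  fun n => if h : n < K then bvec K g P_T ⟨n, h⟩ else 0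

/-- Partial sums of the solution, as a recursion in `c`. -/
noncomputable def Tf (K : ℕ) (g : Fin K → ℝ) (P_T : ℝ) (c : ℝ) : ℕ → ℝ
  | 0 => 0
  | n + 1 => (1 + c) * Tf K g P_T c n + c * Bf K g P_T n

/-- The explicit solution. -/
noncomputable def sf (K : ℕ) (g : Fin K → ℝ) (P_T : ℝ) (R : ℝ) : Fin K → ℝ :=
  fun k => ((2 : ℝ) ^ R - 1) *
    (Tf K g P_T ((2 : ℝ) ^ R - 1) k + Bf K g P_T k)

lemma mulVec_eq (K : ℕ) (x : Fin K → ℝ) (i : Fin K) :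
    (Amat K).mulVec x i =
      ∑ m ∈ Finset.range i.val, (if h : m < K then x ⟨m, h⟩ else 0) := by
  have h1 : (Amat K).mulVec x i
      = ∑ k : Fin K, (if (k : ℕ) < (i : ℕ) then x k else 0) := by
    simp only [Matrix.mulVec, dotProduct, Amat, Matrix.of_apply, ite_mul, one_mul,
      zero_mul]
    exact Finset.sum_congr rfl (fun k _ => if_congr Fin.lt_def rfl rfl)
  rw [h1]
  have h2 : ∀ k : Fin K, (if (k : ℕ) < (i : ℕ) then x k else 0)
      = (fun m => if h : m < K then (if m < (i : ℕ) then x ⟨m, h⟩ else 0) else 0)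
        (k : ℕ) := by
    intro k; simp [k.isLt]
  rw [Finset.sum_congr rfl (fun k _ => h2 k),
    Fin.sum_univ_eq_sum_range (fun m =>
      if h : m < K then (if m < (i : ℕ) then x ⟨m, h⟩ else 0) else 0) K]
  rw [← Finset.sum_subset (Finset.range_subset_range.mpr i.isLt.le)]
  · apply Finset.sum_congr rfl
    intro m hm
    have hmi : m < (i : ℕ) := Finset.mem_range.mp hm
    have hmK : m < K := lt_trans hmi i.isLt
    simp [hmK, hmi]
  · intro m _ hm
    have : ¬ m < (i : ℕ) := fun h => hm (Finset.mem_range.mpr h)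
    simp [this]

lemma sum_Tf (K : ℕ) (g : Fin K → ℝ) (P_T : ℝ) (c : ℝ) :
    ∀ n, ∑ m ∈ Finset.range n, c * (Tf K g P_T c m + Bf K g P_T m)
      = Tf K g P_T c n
  | 0 => by simp [Tf]
  | n + 1 => by
      rw [Finset.sum_range_succ, sum_Tf K g P_T c n]
      show Tf K g P_T c n + c * (Tf K g P_T c n + Bf K g P_T n)
        = (1 + c) * Tf K g P_T c n + c * Bf K g P_T n
      ring

lemma mulVec_sf (K : ℕ) (g : Fin K → ℝ) (P_T : ℝ) (R : ℝ) (i : Fin K) :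
    (Amat K).mulVec (sf K g P_T R) i
      = Tf K g P_T ((2 : ℝ) ^ R - 1) i.val := by
  rw [mulVec_eq, ← sum_Tf K g P_T ((2 : ℝ) ^ R - 1) i.val]
  apply Finset.sum_congr rfl
  intro m hm
  have hmK : m < K := lt_trans (Finset.mem_range.mp hm) i.isLt
  simp [sf, hmK]

lemma sf_fixed (K : ℕ) (g : Fin K → ℝ) (P_T : ℝ) (R : ℝ) :
    sf K g P_T R = ((2 : ℝ) ^ R - 1) •
      ((Amat K).mulVec (sf K g P_T R) + bvec K g P_T) := by
  funext i
  simp only [Pi.smul_apply, Pi.add_apply, smul_eq_mul, mulVec_sf]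
  simp [sf, Bf, i.isLt]

lemma Bf_nonneg (K : ℕ) (g : Fin K → ℝ) (P_T : ℝ)
    (hgpos : ∀ k, 0 < g k) (hPT : 0 < P_T) (n : ℕ) :
    0 ≤ Bf K g P_T n := by
  unfold Bf
  rcases Nat.lt_or_ge n K with h | h
  · rw [dif_pos h]
    have := hgpos ⟨n, h⟩
    unfold bvec
    positivity
  · rw [dif_neg (by omega)]

lemma Tf_nonneg (K : ℕ) (g : Fin K → ℝ) (P_T : ℝ)
    (hgpos : ∀ k, 0 < g k) (hPT : 0 < P_T) {c : ℝ} (hc : 0 ≤ c) :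
    ∀ n, 0 ≤ Tf K g P_T c n
  | 0 => le_refl 0
  | n + 1 => by
      have h1 := Tf_nonneg K g P_T hgpos hPT hc n
      have h2 : 0 ≤ Bf K g P_T n := Bf_nonneg K g P_T hgpos hPT n
      have h3 : (0:ℝ) ≤ 1 + c := by linarith
      show 0 ≤ (1 + c) * Tf K g P_T c n + c * Bf K g P_T n
      exact add_nonneg (mul_nonneg h3 h1) (mul_nonneg hc h2)

lemma Bf_pos (K : ℕ) (g : Fin K → ℝ) (P_T : ℝ)
    (hgpos : ∀ k, 0 < g k) (hPT : 0 < P_T) {n : ℕ} (hn : n < K) :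
    0 < Bf K g P_T n := by
  unfold Bf
  rw [dif_pos hn]
  unfold bvec
  have := hgpos ⟨n, hn⟩
  positivity

lemma Tf_mono (K : ℕ) (g : Fin K → ℝ) (P_T : ℝ)
    (hgpos : ∀ k, 0 < g k) (hPT : 0 < P_T) {c c' : ℝ} (hc : 0 ≤ c) (h : c ≤ c') :
    ∀ n, Tf K g P_T c n ≤ Tf K g P_T c' n
  | 0 => le_refl 0
  | n + 1 => by
      have h1 := Tf_mono K g P_T hgpos hPT hc h n
      have h2 := Tf_nonneg K g P_T hgpos hPT hc n
      have h3 : 0 ≤ Bf K g P_T n := Bf_nonneg K g P_T hgpos hPT n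
      show (1 + c) * Tf K g P_T c n + c * Bf K g P_T n
        ≤ (1 + c') * Tf K g P_T c' n + c' * Bf K g P_T n
      nlinarith

lemma cpos (R : ℝ) (hR : 0 < R) : 0 < (2 : ℝ) ^ R - 1 := by
  have : (1 : ℝ) = (2 : ℝ) ^ (0 : ℝ) := (Real.rpow_zero 2).symm
  have h2 : (2 : ℝ) ^ (0 : ℝ) < (2 : ℝ) ^ R :=
    Real.rpow_lt_rpow_left_iff (by norm_num : (1:ℝ) < 2) |>.mpr hR
  rw [Real.rpow_zero] at h2
  linarith

lemma cont_c : Continuous fun R : ℝ => (2 : ℝ) ^ R - 1 := by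
  have h : Continuous fun R : ℝ => (2 : ℝ) ^ R := by
    apply Continuous.rpow continuous_const continuous_id
    intro x; left; norm_num
  exact h.sub continuous_const

lemma cont_T (K : ℕ) (g : Fin K → ℝ) (P_T : ℝ) :
    ∀ n, Continuous fun R : ℝ => Tf K g P_T ((2 : ℝ) ^ R - 1) n
  | 0 => by simpa [Tf] using continuous_const
  | n + 1 => by
      have h1 := cont_T K g P_T n
      show Continuous fun R : ℝ =>
        (1 + ((2:ℝ)^R - 1)) * Tf K g P_T ((2:ℝ)^R - 1) n
          + ((2:ℝ)^R - 1) * Bf K g P_T n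
      exact ((continuous_const.add cont_c).mul h1).add (cont_c.mul continuous_const)

lemma Tf_c0 (K : ℕ) (g : Fin K → ℝ) (P_T : ℝ) :
    ∀ n, Tf K g P_T 0 n = 0
  | 0 => rfl
  | n + 1 => by
      show (1 + 0) * Tf K g P_T 0 n + 0 * Bf K g P_T n = 0
      rw [Tf_c0 K g P_T n]; ring

/-- For every `R > 0` the triangular system `s = (2^R - 1)(A s + b)` has a unique
solution `s(R)`; it is entrywise positive, entrywise continuous and strictly
increasing in `R` on `(0, ∞)`, with `𝟙ᵀ s(R) → 0` as `R → 0⁺` and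
`𝟙ᵀ s(R) → ∞` as `R → ∞`. -/
theorem stmt_8 (K : ℕ) (hK : 1 ≤ K) (g : Fin K → ℝ)
    (hgpos : ∀ k, 0 < g k) (hgdec : StrictAnti g)
    (P_T : ℝ) (hPT : 0 < P_T) :
    ∃ s : ℝ → Fin K → ℝ,
      (∀ R : ℝ, 0 < R →
        s R = ((2 : ℝ) ^ R - 1) • ((Amat K).mulVec (s R) + bvec K g P_T)) ∧
      (∀ R : ℝ, 0 < R → ∀ x : Fin K → ℝ,
        x = ((2 : ℝ) ^ R - 1) • ((Amat K).mulVec x + bvec K g P_T) → x = s R) ∧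
      (∀ R : ℝ, 0 < R → ∀ k, 0 < s R k) ∧
      (∀ k, ContinuousOn (fun R => s R k) (Set.Ioi (0 : ℝ))) ∧
      (∀ k, StrictMonoOn (fun R => s R k) (Set.Ioi (0 : ℝ))) ∧
      Filter.Tendsto (fun R => ∑ k, s R k) (nhdsWithin 0 (Set.Ioi (0 : ℝ))) (nhds 0) ∧
      Filter.Tendsto (fun R => ∑ k, s R k) Filter.atTop Filter.atTop := by
  refine ⟨sf K g P_T, fun R _ => sf_fixed K g P_T R, ?_, ?_, ?_, ?_, ?_, ?_⟩
  · -- uniqueness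
    intro R hR x hx
    funext i
    suffices h : ∀ n, ∀ hn : n < K, x ⟨n, hn⟩ = sf K g P_T R ⟨n, hn⟩ by
      have := h i.val i.isLt
      simpa using this
    intro n
    induction n using Nat.strong_induction_on with
    | _ n IH =>
      intro hn
      have hxi := congrFun hx ⟨n, hn⟩
      have hsi := congrFun (sf_fixed K g P_T R) ⟨n, hn⟩
      have hm : (Amat K).mulVec x ⟨n, hn⟩
          = (Amat K).mulVec (sf K g P_T R) ⟨n, hn⟩ := by
        rw [mulVec_eq, mulVec_eq]
        apply Finset.sum_congr rfl
        intro m hmem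
        have hmn : m < n := Finset.mem_range.mp hmem
        have hmK : m < K := lt_trans hmn hn
        simp [hmK, IH m hmn hmK]
      simp only [Pi.smul_apply, Pi.add_apply, smul_eq_mul] at hxi hsi
      rw [hxi, hm, ← hsi]
  · -- positivity
    intro R hR k
    have hc := cpos R hR
    have hT := Tf_nonneg K g P_T hgpos hPT hc.le k.val
    have hB := Bf_pos K g P_T hgpos hPT k.isLt
    show (0:ℝ) < ((2:ℝ)^R - 1) * (Tf K g P_T ((2:ℝ)^R - 1) k.val + Bf K g P_T k.val)
    exact mul_pos hc (by linarith)
  · -- continuity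
    intro k
    have : Continuous fun R : ℝ => sf K g P_T R k := by
      unfold sf
      exact cont_c.mul ((cont_T K g P_T k.val).add continuous_const)
    exact this.continuousOn
  · -- strict monotonicity
    intro k
    intro R1 hR1 R2 hR2 h12
    have hc1 := cpos R1 hR1
    have hcc : (2:ℝ)^R1 - 1 < (2:ℝ)^R2 - 1 := by
      have := Real.rpow_lt_rpow_left_iff (x := (2:ℝ)) (by norm_num : (1:ℝ) < 2) |>.mpr h12
      linarith
    have hT1 := Tf_nonneg K g P_T hgpos hPT hc1.le k.val
    have hTm := Tf_mono K g P_T hgpos hPT hc1.le hcc.le k.val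
    have hB := Bf_pos K g P_T hgpos hPT k.isLt
    show sf K g P_T R1 k < sf K g P_T R2 k
    unfold sf
    nlinarith
  · -- limit at 0⁺
    have htot : ∀ R : ℝ, (∑ k, sf K g P_T R k)
        = Tf K g P_T ((2:ℝ)^R - 1) K := by
      intro R
      rw [← sum_Tf K g P_T ((2:ℝ)^R - 1) K]
      exact Fin.sum_univ_eq_sum_range (fun m =>
        ((2:ℝ)^R - 1) * (Tf K g P_T ((2:ℝ)^R - 1) m + Bf K g P_T m)) K
    have hcont := (cont_T K g P_T K).tendsto 0
    have h0 : Tf K g P_T ((2:ℝ)^(0:ℝ) - 1) K = 0 := by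
      rw [Real.rpow_zero]
      simpa using Tf_c0 K g P_T K
    rw [h0] at hcont
    have := hcont.mono_left (nhdsWithin_le_nhds (s := Set.Ioi (0:ℝ)))
    simpa [htot] using this
  · -- limit at ∞
    have htot : ∀ R : ℝ, (∑ k, sf K g P_T R k)
        = Tf K g P_T ((2:ℝ)^R - 1) K := by
      intro R
      rw [← sum_Tf K g P_T ((2:ℝ)^R - 1) K]
      exact Fin.sum_univ_eq_sum_range (fun m =>
        ((2:ℝ)^R - 1) * (Tf K g P_T ((2:ℝ)^R - 1) m + Bf K g P_T m)) K
    have hB0 : 0 < Bf K g P_T 0 := Bf_pos K g P_T hgpos hPT (by omega)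
    have h2R : Tendsto (fun R : ℝ => (2:ℝ) ^ R) atTop atTop := by
      have hlog : (0:ℝ) < Real.log 2 := Real.log_pos (by norm_num)
      have h1 : Tendsto (fun R : ℝ => R * Real.log 2) atTop atTop :=
        Tendsto.atTop_mul_const hlog tendsto_id
      have := Real.tendsto_exp_atTop.comp h1
      refine this.congr fun R => ?_
      simp [Function.comp, Real.rpow_def_of_pos (by norm_num : (0:ℝ) < 2), mul_comm]
    have hcR : Tendsto (fun R : ℝ => (2:ℝ)^R - 1) atTop atTop :=
      tendsto_atTop_add_const_right atTop (-1) h2R |>.congr fun R => by ring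
    have hlow : Tendsto (fun R : ℝ => ((2:ℝ)^R - 1) * Bf K g P_T 0) atTop atTop :=
      Tendsto.atTop_mul_const hB0 hcR
    apply tendsto_atTop_mono' _ _ hlow
    filter_upwards [eventually_gt_atTop (0:ℝ)] with R hR
    have hc := cpos R hR
    have hle : ((2:ℝ)^R - 1) * Bf K g P_T 0 ≤ Tf K g P_T ((2:ℝ)^R - 1) K := by
      rw [← sum_Tf K g P_T ((2:ℝ)^R - 1) K]
      have hmem : (0:ℕ) ∈ Finset.range K := Finset.mem_range.mpr (by omega)
      have := Finset.single_le_sum (f := fun m =>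
        ((2:ℝ)^R - 1) * (Tf K g P_T ((2:ℝ)^R - 1) m + Bf K g P_T m))
        (fun m _ => by
          have hT := Tf_nonneg K g P_T hgpos hPT hc.le m
          have hBm : 0 ≤ Bf K g P_T m := Bf_nonneg K g P_T hgpos hPT m
          exact mul_nonneg hc.le (add_nonneg hT hBm)) hmem
      calc ((2:ℝ)^R - 1) * Bf K g P_T 0
          = ((2:ℝ)^R - 1) * (Tf K g P_T ((2:ℝ)^R - 1) 0 + Bf K g P_T 0) := by
            show _ = ((2:ℝ)^R - 1) * ((0:ℝ) + Bf K g P_T 0); ring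
        _ ≤ _ := this
    rw [htot R]
    exact hle
end

section
/- Suppose λ > 0 and v ∈ ℝ^K has all entries strictly positive with B v = λ v, and set R* = log₂(1 + 1/λ) and S = ∑_{k=1}^K 1/g_k. Then log₂(1 + 1/((K − 1) + S/P_T)) ≤ R* ≤ log₂(1 + P_T/S). -/
/-- Bounds on the fairness rate `R* = log₂(1 + 1/λ)`:
`log₂(1 + 1/((K-1) + S/P_T)) ≤ R* ≤ log₂(1 + P_T/S)` with `S = ∑_k 1/g_k`. -/
theorem stmt_10 (K : ℕ) (hK : 1 ≤ K) (g : Fin K → ℝ)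
    (hgpos : ∀ k, 0 < g k) (hgdec : StrictAnti g)
    (P_T : ℝ) (hPT : 0 < P_T)
    (lam : ℝ) (hlam : 0 < lam)
    (v : Fin K → ℝ) (hv : ∀ k, 0 < v k)
    (heig : (Bmat K g P_T).mulVec v = lam • v) :
    Real.logb 2 (1 + 1 / (((K : ℝ) - 1) + (∑ k, 1 / g k) / P_T)) ≤
        Real.logb 2 (1 + 1 / lam) ∧
      Real.logb 2 (1 + 1 / lam) ≤ Real.logb 2 (1 + P_T / (∑ k, 1 / g k)) := by
  set S : ℝ := ∑ k, 1 / g k with hSdef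
  set T : ℝ := ∑ k, v k with hTdef
  have hT : 0 < T := Finset.sum_pos (fun k _ => hv k) (by simp [Finset.univ_nonempty_iff, Fin.pos_iff_nonempty.mp hK])
  have hS : 0 < S := Finset.sum_pos (fun k _ => one_div_pos.mpr (hgpos k)) (by simp [Finset.univ_nonempty_iff, Fin.pos_iff_nonempty.mp hK])
  -- row equation
  have key : ∀ i, (∑ k, (if k < i then v k else 0)) + (1 / (P_T * g i)) * T = lam * v i := by
    intro i
    have h := congrFun heig i
    simp only [Bmat, Amat, bvec, Matrix.mulVec, dotProduct, Matrix.of_apply,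
      Matrix.add_apply, Pi.smul_apply, smul_eq_mul] at h
    rw [← h]
    have hterm : ∀ k : Fin K, ((if k < i then (1:ℝ) else 0) + 1 / (P_T * g i)) * v k
        = (if k < i then v k else 0) + (1 / (P_T * g i)) * v k := by
      intro k; split <;> ring
    rw [Finset.sum_congr rfl (fun k _ => hterm k), Finset.sum_add_distrib, Finset.mul_sum]
  set C : ℝ := ∑ i, ∑ k, (if k < i then v k else 0) with hCdef
  have hsum : C + (S / P_T) * T = lam * T := by
    have h1 : ∑ i, ((∑ k, (if k < i then v k else 0)) + (1 / (P_T * g i)) * T)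
        = ∑ i, lam * v i := Finset.sum_congr rfl (fun i _ => key i)
    rw [Finset.sum_add_distrib, ← Finset.mul_sum] at h1
    have h2 : (∑ i, (1 / (P_T * g i)) * T) = (S / P_T) * T := by
      rw [← Finset.sum_mul]
      congr 1
      rw [hSdef, Finset.sum_div]
      refine Finset.sum_congr rfl (fun i _ => ?_)
      rw [div_div, mul_comm (g i) P_T]
    rw [h2] at h1
    exact h1
  have hC0 : 0 ≤ C := by
    refine Finset.sum_nonneg (fun i _ => Finset.sum_nonneg (fun k _ => ?_))
    split
    · exact (hv k).le
    · exact le_refl 0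
  have hCle : C ≤ ((K : ℝ) - 1) * T := by
    rw [hCdef, Finset.sum_comm]
    have hk : ∀ k : Fin K, (∑ i, (if k < i then v k else 0)) ≤ ((K : ℝ) - 1) * v k := by
      intro k
      rw [← Finset.sum_filter, Finset.sum_const, nsmul_eq_mul]
      have hcard : (Finset.univ.filter (fun i : Fin K => k < i)).card ≤ K - 1 := by
        have hsub : Finset.univ.filter (fun i : Fin K => k < i)
            ⊆ Finset.univ.erase ⟨0, hK⟩ := by
          intro i hi
          simp only [Finset.mem_filter, Finset.mem_univ, true_and] at hi
          refine Finset.mem_erase.mpr ⟨?_, Finset.mem_univ _⟩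
          intro h0
          rw [h0] at hi
          exact absurd hi (by simp [Fin.lt_def])
        have := Finset.card_le_card hsub
        simpa [Finset.card_erase_of_mem, Finset.card_univ] using this
      have hcast : ((Finset.univ.filter (fun i : Fin K => k < i)).card : ℝ) ≤ (K : ℝ) - 1 := by
        have := (Nat.cast_le (α := ℝ)).mpr hcard
        rw [Nat.cast_sub hK] at this
        simpa using this
      nlinarith [hv k]
    calc (∑ k, ∑ i, (if k < i then v k else 0)) ≤ ∑ k, ((K : ℝ) - 1) * v k :=
          Finset.sum_le_sum (fun k _ => hk k)
      _ = ((K : ℝ) - 1) * T := by rw [← Finset.mul_sum]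
  have hlam_ge : S / P_T ≤ lam := by nlinarith
  have hlam_le : lam ≤ ((K : ℝ) - 1) + S / P_T := by nlinarith
  have hKS : 0 < ((K : ℝ) - 1) + S / P_T := by
    have : (1 : ℝ) ≤ (K : ℝ) := by exact_mod_cast hK
    have : 0 < S / P_T := by positivity
    linarith
  constructor
  · have h1 : 1 + 1 / (((K : ℝ) - 1) + S / P_T) ≤ 1 + 1 / lam := by
      have := one_div_le_one_div_of_le hlam hlam_le
      linarith
    exact Real.logb_le_logb_of_le one_lt_two (by positivity) h1
  · have h1 : 1 + 1 / lam ≤ 1 + P_T / S := by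
      have h2 : 1 / lam ≤ P_T / S := by
        rw [div_le_div_iff₀ hlam hS]
        have := (div_le_iff₀ hPT).mp hlam_ge
        nlinarith
      linarith
    exact Real.logb_le_logb_of_le one_lt_two (by positivity) h1
end
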